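/- Let G be a digraph with at least one arc. Then q(G) ≤ max over arcs (v_i,v_j) of ( d_i^+(d_i^+ + m_i^+) + d_j^+(d_j^+ + m_j^+) ) / ( d_i^+ + d_j^+ ). -/

import Mathlib

open Matrix Finset

/-- Spectral radius of a complex square matrix: the largest modulus of its eigenvalues. -/
noncomputable def specRad {n : ℕ} (M : Matrix (Fin n) (Fin n) ℂ) : ℝ :=
  sSup {x : ℝ | ∃ μ ∈ spectrum ℂ M, x = ‖μ‖}

/-- Spectral radius of a real square matrix (via its complex eigenvalues). -/
noncomputable def specRadR {n : ℕ} (M : Matrix (Fin n) (Fin n) ℝ) : ℝ :=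
  specRad (M.map Complex.ofReal)

/-- Adjacency matrix of a digraph given by its arc relation. -/
def adjM {n : ℕ} (E : Fin n → Fin n → Prop) [DecidableRel E] :
    Matrix (Fin n) (Fin n) ℝ := fun i j => if E i j then 1 else 0

/-- Outdegree of vertex `i`. -/
def outdeg {n : ℕ} (E : Fin n → Fin n → Prop) [DecidableRel E] (i : Fin n) : ℕ :=
  (Finset.univ.filter (fun j => E i j)).card

/-- Signless Laplacian `Q(G) = D(G) + A(G)`. -/
noncomputable def Qmat {n : ℕ} (E : Fin n → Fin n → Prop) [DecidableRel E] :
    Matrix (Fin n) (Fin n) ℝ :=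
  Matrix.diagonal (fun i => (outdeg E i : ℝ)) + adjM E

/-- Signless Laplacian spectral radius `q(G)`. -/
noncomputable def qG {n : ℕ} (E : Fin n → Fin n → Prop) [DecidableRel E] : ℝ :=
  specRadR (Qmat E)

/-- Average 2-outdegree `m_i^+`. -/
noncomputable def m2 {n : ℕ} (E : Fin n → Fin n → Prop) [DecidableRel E] (i : Fin n) : ℝ :=
  (∑ j ∈ Finset.univ.filter (fun j => E i j), (outdeg E j : ℝ)) / (outdeg E i : ℝ)

/-- The finset of arcs of the digraph. -/
def arcs {n : ℕ} (E : Fin n → Fin n → Prop) [DecidableRel E] : Finset (Fin n × Fin n) :=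
  Finset.univ.filter (fun p => E p.1 p.2)

/-- Strong connectivity of a digraph. -/
def StrongConn {n : ℕ} (E : Fin n → Fin n → Prop) : Prop :=
  ∀ i j : Fin n, Relation.ReflTransGen E i j

/-- Irreducibility of a square matrix: the digraph of nonzero entries is strongly connected. -/
def MatIrred {n : ℕ} {α : Type*} [Zero α] (M : Matrix (Fin n) (Fin n) α) : Prop :=
  ∀ i j : Fin n, i ≠ j → Relation.TransGen (fun a b => M a b ≠ 0) i j

/-!
The signless Laplacian factors as `Q = S (S + T)ᵀ`, where `S` and `T` are the vertex–arc
incidence matrices of tails and heads. If `Q v = μ v`, the vector `z = (S + T)ᵀ v`, i.e.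
`z (i, j) = v i + v j` on arcs, satisfies `(S + T)ᵀ S z = μ z`; the arc matrix `(S + T)ᵀ S`
is nonnegative, so comparing `z` with the positive weight `d⁺ i + d⁺ j` at the arc where
`‖z‖ / weight` is largest bounds `‖μ‖` by the weighted row sum of that arc, which is
`d⁺ i (d⁺ i + m⁺ i) + d⁺ j (d⁺ j + m⁺ j)` divided by the weight. If `z` vanishes on all arcs,
then `Q v = S z = 0` and `μ = 0`.
-/

theorem Matrix.exists_mulVec_eq_smul_of_mem_spectrum {ι K : Type*} [Fintype ι] [DecidableEq ι]
    [Field K] {A : Matrix ι ι K} {μ : K} (hμ : μ ∈ spectrum K A) :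
    ∃ v ≠ 0, A *ᵥ v = μ • v := by
  rw [← Matrix.spectrum_toLin', ← Module.End.hasEigenvalue_iff_mem_spectrum] at hμ
  obtain ⟨v, hv, hv0⟩ := hμ.exists_hasEigenvector
  exact ⟨v, hv0, by simpa [Module.End.mem_eigenspace_iff] using hv⟩

theorem Finset.exists_norm_le_weighted_rowSum {ι : Type*} {s : Finset ι} (K : ι → ι → ℝ)
    (hK : ∀ i ∈ s, ∀ j ∈ s, 0 ≤ K i j) {w : ι → ℝ} (hw : ∀ i ∈ s, 0 < w i) {z : ι → ℂ}
    {μ : ℂ} (hz : ∃ i ∈ s, z i ≠ 0) (hμ : ∀ i ∈ s, μ * z i = ∑ j ∈ s, K i j • z j) :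
    ∃ i ∈ s, ‖μ‖ ≤ (∑ j ∈ s, K i j * w j) / w i := by
  obtain ⟨i₀, hi₀, hzi₀⟩ := hz
  obtain ⟨i, hi, hmax⟩ := s.exists_max_image (fun j => ‖z j‖ / w j) ⟨i₀, hi₀⟩
  set c := ‖z i‖ / w i with hc_def
  have hc : 0 < c := (div_pos (norm_pos_iff.2 hzi₀) (hw i₀ hi₀)).trans_le (hmax i₀ hi₀)
  have hzc : ∀ j ∈ s, ‖z j‖ ≤ c * w j := fun j hj => (div_le_iff₀ (hw j hj)).1 (hmax j hj)
  have hzi : ‖z i‖ = c * w i := by rw [hc_def, div_mul_cancel₀ _ (hw i hi).ne']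
  refine ⟨i, hi, (le_div_iff₀ (hw i hi)).2 (le_of_mul_le_mul_left ?_ hc)⟩
  calc c * (‖μ‖ * w i) = ‖μ * z i‖ := by rw [norm_mul, hzi]; ring
    _ ≤ ∑ j ∈ s, K i j * ‖z j‖ := by
      rw [hμ i hi]
      refine (norm_sum_le _ _).trans_eq (sum_congr rfl fun j hj => ?_)
      rw [norm_smul, Real.norm_of_nonneg (hK i hi j hj)]
    _ ≤ ∑ j ∈ s, K i j * (c * w j) :=
      sum_le_sum fun j hj => mul_le_mul_of_nonneg_left (hzc j hj) (hK i hi j hj)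
    _ = c * ∑ j ∈ s, K i j * w j := by rw [mul_sum]; exact sum_congr rfl fun j _ => by ring

section Digraph

variable {n : ℕ} (E : Fin n → Fin n → Prop) [DecidableRel E]

noncomputable def arcBound (p : Fin n × Fin n) : ℝ :=
  ((outdeg E p.1 : ℝ) * ((outdeg E p.1 : ℝ) + m2 E p.1) +
    (outdeg E p.2 : ℝ) * ((outdeg E p.2 : ℝ) + m2 E p.2)) /
    ((outdeg E p.1 : ℝ) + (outdeg E p.2 : ℝ))

/-- The arc matrix `(S + T)ᵀ S`, where `S` and `T` are the tail and head incidence matrices. -/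
def arcKernel (p q : Fin n × Fin n) : ℝ :=
  (if q.1 = p.1 then 1 else 0) + (if q.1 = p.2 then 1 else 0)

theorem m2_nonneg (i : Fin n) : 0 ≤ m2 E i :=
  div_nonneg (sum_nonneg fun _ _ => Nat.cast_nonneg _) (Nat.cast_nonneg _)

theorem arcBound_nonneg (p : Fin n × Fin n) : 0 ≤ arcBound E p := by
  unfold arcBound
  have := m2_nonneg E p.1
  have := m2_nonneg E p.2
  positivity

theorem outdeg_pos_of_mem_arcs {p : Fin n × Fin n} (hp : p ∈ arcs E) : 0 < outdeg E p.1 :=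
  card_pos.2 ⟨p.2, by simpa [arcs] using hp⟩

theorem outdeg_mul_m2 (i : Fin n) :
    (outdeg E i : ℝ) * m2 E i = ∑ k ∈ univ.filter (fun k => E i k), (outdeg E k : ℝ) := by
  rcases Nat.eq_zero_or_pos (outdeg E i) with h | h
  · simp [m2, card_eq_zero.1 h]
  · exact mul_div_cancel₀ _ (by positivity)

theorem sum_outdeg_add_outdeg (i : Fin n) :
    ∑ k ∈ univ.filter (fun k => E i k), ((outdeg E i : ℝ) + outdeg E k) =
      outdeg E i * (outdeg E i + m2 E i) := by
  rw [sum_add_distrib, sum_const, nsmul_eq_mul, mul_add, outdeg_mul_m2]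
  rfl

theorem sum_arcs_ite_fst {M : Type*} [AddCommMonoid M] (g : Fin n × Fin n → M) (i : Fin n) :
    ∑ q ∈ arcs E, (if q.1 = i then g q else 0) = ∑ k ∈ univ.filter (fun k => E i k), g (i, k) := by
  rw [arcs, sum_filter, Fintype.sum_prod_type, sum_filter]
  simp_rw [← ite_and, and_comm (a := E _ _), ite_and]
  simp

theorem sum_arcs_arcKernel_smul {M : Type*} [AddCommMonoid M] [Module ℝ M]
    (g : Fin n × Fin n → M) (p : Fin n × Fin n) :
    ∑ q ∈ arcs E, arcKernel p q • g q =
      ∑ k ∈ univ.filter (fun k => E p.1 k), g (p.1, k) +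
        ∑ k ∈ univ.filter (fun k => E p.2 k), g (p.2, k) := by
  simp only [arcKernel, add_smul, ite_smul, one_smul, zero_smul, sum_add_distrib,
    sum_arcs_ite_fst]

theorem Qmat_map_mulVec_apply (v : Fin n → ℂ) (i : Fin n) :
    ((Qmat E).map Complex.ofReal *ᵥ v) i = ∑ k ∈ univ.filter (fun k => E i k), (v i + v k) := by
  simp [Qmat, adjM, mulVec, dotProduct, Matrix.map_apply, add_mul, sum_add_distrib,
    diagonal_apply, outdeg, apply_ite Complex.ofReal, ite_mul, sum_filter]

theorem eq_zero_or_exists_arc_norm_le_arcBound {v : Fin n → ℂ} {μ : ℂ} (hv0 : v ≠ 0)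
    (hv : (Qmat E).map Complex.ofReal *ᵥ v = μ • v) :
    μ = 0 ∨ ∃ p ∈ arcs E, ‖μ‖ ≤ arcBound E p := by
  set z : Fin n × Fin n → ℂ := fun p => v p.1 + v p.2
  have hrow : ∀ i, μ * v i = ∑ k ∈ univ.filter (fun k => E i k), z (i, k) := fun i => by
    rw [← Qmat_map_mulVec_apply, hv, Pi.smul_apply, smul_eq_mul]
  by_cases hz : ∃ p ∈ arcs E, z p ≠ 0
  · right
    have hw : ∀ p ∈ arcs E, (0 : ℝ) < outdeg E p.1 + outdeg E p.2 := fun p hp => by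
      have := outdeg_pos_of_mem_arcs E hp
      positivity
    obtain ⟨p, hp, hle⟩ := exists_norm_le_weighted_rowSum (arcKernel (n := n))
      (fun _ _ _ _ => by unfold arcKernel; positivity) hw hz
      (fun p _ => by rw [sum_arcs_arcKernel_smul, ← hrow, ← hrow]; ring)
    refine ⟨p, hp, hle.trans_eq ?_⟩
    simp only [← smul_eq_mul, sum_arcs_arcKernel_smul, sum_outdeg_add_outdeg]
    rfl
  · left
    push Not at hz
    obtain ⟨i, hi⟩ := Function.ne_iff.1 hv0
    have hμi := hrow i
    rw [sum_eq_zero fun k hk => hz (i, k) (by simpa [arcs] using hk)] at hμi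
    exact (mul_eq_zero.1 hμi).resolve_right hi

end Digraph

theorem stmt_10_general {n : ℕ} (E : Fin n → Fin n → Prop) [DecidableRel E]
    (harcs : (arcs E).Nonempty) :
    qG E ≤ (arcs E).sup' harcs (fun p =>
      ((outdeg E p.1 : ℝ) * ((outdeg E p.1 : ℝ) + m2 E p.1) +
       (outdeg E p.2 : ℝ) * ((outdeg E p.2 : ℝ) + m2 E p.2)) /
        ((outdeg E p.1 : ℝ) + (outdeg E p.2 : ℝ))) := by
  change specRad _ ≤ (arcs E).sup' harcs (arcBound E)
  have hB : 0 ≤ (arcs E).sup' harcs (arcBound E) :=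
    le_sup'_of_le _ harcs.choose_spec (arcBound_nonneg E _)
  refine Real.sSup_le ?_ hB
  rintro _ ⟨μ, hμ, rfl⟩
  obtain ⟨v, hv0, hv⟩ := Matrix.exists_mulVec_eq_smul_of_mem_spectrum hμ
  rcases eq_zero_or_exists_arc_norm_le_arcBound E hv0 hv with rfl | ⟨p, hp, hle⟩
  · simpa using hB
  · exact le_sup'_of_le _ hp hle

/-- `q(G) ≤ max over arcs of (d_i⁺(d_i⁺+m_i⁺)+d_j⁺(d_j⁺+m_j⁺))/(d_i⁺+d_j⁺)`. -/
theorem stmt_10 {n : ℕ} (E : Fin n → Fin n → Prop) [DecidableRel E]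
    (hloop : ∀ i, ¬ E i i) (harcs : (arcs E).Nonempty) :
    qG E ≤ (arcs E).sup' harcs (fun p =>
      ((outdeg E p.1 : ℝ) * ((outdeg E p.1 : ℝ) + m2 E p.1) +
       (outdeg E p.2 : ℝ) * ((outdeg E p.2 : ℝ) + m2 E p.2)) /
        ((outdeg E p.1 : ℝ) + (outdeg E p.2 : ℝ))) :=
  stmt_10_general E harcs
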